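/- arXiv:2407.06012 — 4 statements merged into one kernel-verified Lean document; each statement's English description precedes it below -/
import Mathlib

section
/- The ℓ2 operator norm of the matrix A satisfies ‖A‖ ≤ 1. -/
open Matrix

noncomputable section

/-- The step function underlying the permutation matrix `P`: it sends the index `(j, x)`
to `((j+1) mod 3q, π_{j+1}(x))` for `0 ≤ j < q`, to `(j+1, x)` for `q ≤ j < 2q`, and to
`((j+1) mod 3q, π_{3q−j}⁻¹(x))` for `2q ≤ j < 3q` (here `π` is 0-indexed). -/
def stepFn (q N : ℕ) (π : Fin q → Equiv.Perm (Fin N)) :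
    Fin (3 * q) × Fin N → Fin (3 * q) × Fin N := fun p =>
  if h : (p.1 : ℕ) < q then
    (⟨((p.1 : ℕ) + 1) % (3 * q), Nat.mod_lt _ ((Nat.zero_le _).trans_lt p.1.isLt)⟩,
      π ⟨(p.1 : ℕ), h⟩ p.2)
  else if h2 : (p.1 : ℕ) < 2 * q then
    (⟨((p.1 : ℕ) + 1) % (3 * q), Nat.mod_lt _ ((Nat.zero_le _).trans_lt p.1.isLt)⟩, p.2)
  else
    (⟨((p.1 : ℕ) + 1) % (3 * q), Nat.mod_lt _ ((Nat.zero_le _).trans_lt p.1.isLt)⟩,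
      (π ⟨3 * q - 1 - (p.1 : ℕ), by have := p.1.isLt; omega⟩)⁻¹ p.2)

/-- The `3qN × 3qN` permutation matrix `P`, sending basis vector `e_{(j,x)}` to
`e_{stepFn (j,x)}`. -/
def permMat (q N : ℕ) (π : Fin q → Equiv.Perm (Fin N)) :
    Matrix (Fin (3 * q) × Fin N) (Fin (3 * q) × Fin N) ℂ :=
  Matrix.of fun r c => if r = stepFn q N π c then 1 else 0

/-- The inverse `P⁻¹` of the permutation matrix `P`, sending `e_{stepFn (j,x)}` to
`e_{(j,x)}`. -/
def permMatInv (q N : ℕ) (π : Fin q → Equiv.Perm (Fin N)) :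
    Matrix (Fin (3 * q) × Fin N) (Fin (3 * q) × Fin N) ℂ :=
  Matrix.of fun r c => if stepFn q N π r = c then 1 else 0

/-- The `6qN × 6qN` matrix
`A = (1+e^{−1/q})⁻¹ (|0⟩⟨1| ⊗ (I − e^{−1/q} P) + |1⟩⟨0| ⊗ (I − e^{−1/q} P⁻¹))`. -/
def qlspMat (q N : ℕ) (π : Fin q → Equiv.Perm (Fin N)) :
    Matrix (Fin 2 × Fin (3 * q) × Fin N) (Fin 2 × Fin (3 * q) × Fin N) ℂ :=
  Matrix.of fun r c =>
    ((((1 : ℝ) + Real.exp (-1 / q)) : ℝ) : ℂ)⁻¹ *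
      (if r.1 = 0 ∧ c.1 = 1 then
        ((1 : Matrix (Fin (3 * q) × Fin N) (Fin (3 * q) × Fin N) ℂ)
            - (Real.exp (-1 / q) : ℂ) • permMat q N π) r.2 c.2
      else if r.1 = 1 ∧ c.1 = 0 then
        ((1 : Matrix (Fin (3 * q) × Fin N) (Fin (3 * q) × Fin N) ℂ)
            - (Real.exp (-1 / q) : ℂ) • permMatInv q N π) r.2 c.2
      else 0)

/-- The ℓ2 operator (spectral) norm of a square complex matrix, i.e. the operator norm
of the induced linear map on Euclidean space. -/
noncomputable def l2OpNorm {n : Type*} [Fintype n] [DecidableEq n]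
    (M : Matrix n n ℂ) : ℝ :=
  ‖Matrix.toEuclideanCLM (𝕜 := ℂ) M‖


/-!
Index the rows of `A` by `Fin 2 × X` with `X = Fin (3q) × Fin N`, and let `σ` be the permutation
of `X` underlying `P` (a cyclic shift of the layer index, twisted by a permutation of each
layer). Then `(1 + e^{-1/q}) A = S - e^{-1/q} T`, where `S` swaps the two copies of `X` and `T`
maps `(0, x) ↦ (1, σ⁻¹ x)` and `(1, x) ↦ (0, σ x)`. Both are permutation matrices, hence of
operator norm at most `1`, and the triangle inequality gives `‖A‖ ≤ 1`.
-/

open Equiv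

lemma Fin.val_finRotate {n : ℕ} (i : Fin n) : (finRotate n i : ℕ) = (i + 1) % n := by
  cases n with
  | zero => exact i.elim0
  | succ n =>
    rw [coe_finRotate]
    split_ifs with h
    · simp [h]
    · rw [Nat.mod_eq_of_lt]
      have := Fin.val_lt_last h
      omega

def layerPerm (q N : ℕ) (π : Fin q → Perm (Fin N)) (j : Fin (3 * q)) : Perm (Fin N) :=
  if h : (j : ℕ) < q then π ⟨j, h⟩
  else if _ : (j : ℕ) < 2 * q then 1
  else (π ⟨3 * q - 1 - j, by have := j.isLt; omega⟩)⁻¹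

def stepPerm (q N : ℕ) (π : Fin q → Perm (Fin N)) : Perm (Fin (3 * q) × Fin N) :=
  (finRotate (3 * q)).prodShear (layerPerm q N π)

lemma stepFn_eq_stepPerm (q N : ℕ) (π : Fin q → Perm (Fin N)) :
    stepFn q N π = stepPerm q N π := by
  funext ⟨j, x⟩
  have hj : finRotate (3 * q) j = ⟨(j + 1) % (3 * q), Nat.mod_lt _ j.pos⟩ :=
    Fin.ext (Fin.val_finRotate j)
  simp only [stepFn, stepPerm, prodShear_apply, layerPerm, hj]
  split_ifs <;> rfl

lemma permMat_eq_permMatrix (q N : ℕ) (π : Fin q → Perm (Fin N)) :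
    permMat q N π = (stepPerm q N π)⁻¹.permMatrix ℂ := by
  ext r c
  simp [permMat, PEquiv.toMatrix_apply, stepFn_eq_stepPerm, Perm.inv_def, symm_apply_eq]

lemma permMatInv_eq_permMatrix (q N : ℕ) (π : Fin q → Perm (Fin N)) :
    permMatInv q N π = (stepPerm q N π).permMatrix ℂ := by
  ext r c
  simp [permMatInv, PEquiv.toMatrix_apply, stepFn_eq_stepPerm]

section OffDiag

variable {α : Type*} [DecidableEq α]

def offDiagPerm (σ : Perm α) : Perm (Fin 2 × α) :=
  Function.Involutive.toPerm (fun p => if p.1 = 0 then (1, σ⁻¹ p.2) else (0, σ p.2)) <| by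
    rintro ⟨b, x⟩
    fin_cases b <;> simp

lemma permMatrix_offDiagPerm_one_sub_smul (σ : Perm α) (c : ℂ) :
    (offDiagPerm 1).permMatrix ℂ - c • (offDiagPerm σ).permMatrix ℂ =
      Matrix.of fun r s =>
        if r.1 = 0 ∧ s.1 = 1 then (1 - c • σ⁻¹.permMatrix ℂ) r.2 s.2
        else if r.1 = 1 ∧ s.1 = 0 then (1 - c • σ.permMatrix ℂ) r.2 s.2
        else 0 := by
  ext ⟨b, x⟩ ⟨b', y⟩
  fin_cases b <;> fin_cases b' <;>
    simp [offDiagPerm, PEquiv.toMatrix_apply, Matrix.one_apply]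

end OffDiag

open scoped Matrix.Norms.L2Operator

lemma norm_permMatrix_sub_smul_permMatrix_le {α : Type*} [Fintype α] [DecidableEq α]
    (σ τ : Perm α) (c : ℂ) :
    ‖σ.permMatrix ℂ - c • τ.permMatrix ℂ‖ ≤ 1 + ‖c‖ :=
  calc ‖σ.permMatrix ℂ - c • τ.permMatrix ℂ‖
      ≤ ‖σ.permMatrix ℂ‖ + ‖c‖ * ‖τ.permMatrix ℂ‖ := (norm_sub_le _ _).trans (by rw [norm_smul])
    _ ≤ 1 + ‖c‖ := by
      gcongr
      · exact Matrix.permMatrix_l2_opNorm_le σ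
      · exact mul_le_of_le_one_right (norm_nonneg c) (Matrix.permMatrix_l2_opNorm_le τ)

lemma qlspMat_eq (q N : ℕ) (π : Fin q → Perm (Fin N)) :
    qlspMat q N π = ((1 + Real.exp (-1 / q) : ℝ) : ℂ)⁻¹ •
      ((offDiagPerm 1).permMatrix ℂ -
        (Real.exp (-1 / q) : ℂ) • (offDiagPerm (stepPerm q N π)).permMatrix ℂ) := by
  rw [permMatrix_offDiagPerm_one_sub_smul, ← permMat_eq_permMatrix, ← permMatInv_eq_permMatrix]
  rfl

theorem qlspMat_norm_le_one_general (q N : ℕ)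
    (π : Fin q → Equiv.Perm (Fin N)) :
    l2OpNorm (qlspMat q N π) ≤ 1 := by
  have he : 0 < Real.exp (-1 / q) := Real.exp_pos _
  have hdiff := norm_permMatrix_sub_smul_permMatrix_le (offDiagPerm 1)
    (offDiagPerm (stepPerm q N π)) (Real.exp (-1 / q) : ℂ)
  rw [Complex.norm_real, Real.norm_of_nonneg he.le] at hdiff
  change ‖qlspMat q N π‖ ≤ 1
  rw [qlspMat_eq, norm_smul, norm_inv, Complex.norm_real, Real.norm_of_nonneg (by positivity),
    inv_mul_le_one₀ (by positivity)]
  exact hdiff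

/-- The ℓ2 operator norm of the matrix `A` satisfies `‖A‖ ≤ 1`. -/
theorem qlspMat_norm_le_one (q N : ℕ) (hq : 1 ≤ q) (hN : 1 ≤ N)
    (π : Fin q → Equiv.Perm (Fin N)) :
    l2OpNorm (qlspMat q N π) ≤ 1 :=
  qlspMat_norm_le_one_general q N π
end
end

section
/- For every index (b, j, x) with b ∈ {0,1}, 0 ≤ j ≤ 3q−1, 0 ≤ x ≤ N−1, the (b,j,x)-coordinate of the vector A^{−1} e_{(0,0,0)} is nonzero if and only if b = 1 and x = x_j. -/
open Matrix

noncomputable section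

/-- `chainPerm q N π j = π_j ∘ ⋯ ∘ π_2 ∘ π_1` (for `0 ≤ j ≤ q`; the chain stops growing
beyond `q`), with `chainPerm q N π 0` the identity permutation. -/
def chainPerm (q N : ℕ) (π : Fin q → Equiv.Perm (Fin N)) : ℕ → Equiv.Perm (Fin N)
  | 0 => 1
  | (j + 1) => if h : j < q then π ⟨j, h⟩ * chainPerm q N π j else chainPerm q N π j

/-- `xvec q N hN π j = x_j`, defined by `x_j = Π_j(0)` for `0 ≤ j ≤ q`,
`x_j = Π_q(0)` for `q ≤ j ≤ 2q`, and `x_j = Π_{3q−j}(0)` for `2q ≤ j ≤ 3q−1`,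
where `Π_j = π_j ∘ ⋯ ∘ π_2 ∘ π_1`. -/
def xvec (q N : ℕ) (hN : 0 < N) (π : Fin q → Equiv.Perm (Fin N)) (j : ℕ) : Fin N :=
  if j ≤ q then chainPerm q N π j ⟨0, hN⟩
  else if j ≤ 2 * q then chainPerm q N π q ⟨0, hN⟩
  else chainPerm q N π (3 * q - j) ⟨0, hN⟩


/-!
Writing `t = e^{-1/q}`, `A` is `(1+t)⁻¹` times the block anti-diagonal matrix with blocks
`I - tP` and `I - tP⁻¹`, so `A⁻¹ e_{(0,0,0)}` vanishes on the `b = 0` block and equals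
`(1+t) (I - tP)⁻¹ e_{(0,0)}` on the `b = 1` block. The bijection `(j, x) ↦ (j, σ_j x)`, where
`σ_j` is `Π_j`, `Π_q` or `Π_{3q-j}` according to the range of `j` (so that `σ_j 0 = x_j`),
conjugates the step map of `P` to the rotation `j ↦ j + 1 mod 3q`. Hence `P^{3q} = I`, so
`(I - tP)⁻¹ = (1 - t^{3q})⁻¹ ∑_{k<3q} t^k P^k`, and `P^k e_{(0,0)} = e_{(k, x_k)}`: the
`(1, j, x)` coordinate is `(1+t) t^j / (1 - t^{3q})` if `x = x_j` and `0` otherwise.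
-/

open scoped Kronecker

section Resolvent

variable {K A : Type*} [Field K] [Ring A] [Algebra K A]

def periodicResolvent (t : K) (n : ℕ) (m : A) : A :=
  (1 - t ^ n)⁻¹ • ∑ k ∈ Finset.range n, (t • m) ^ k

theorem mul_periodicResolvent {m : A} {n : ℕ} (hm : m ^ n = 1) {t : K} (ht : t ^ n ≠ 1) :
    (1 - t • m) * periodicResolvent t n m = 1 := by
  rw [periodicResolvent, mul_smul_comm, mul_neg_geom_sum, smul_pow, hm, ← one_smul K (1 : A),
    smul_smul, mul_one, ← sub_smul, smul_smul, inv_mul_cancel₀ (sub_ne_zero.2 ht.symm),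
    one_smul]

end Resolvent

namespace Matrix

variable {ι R : Type*} [Fintype ι] [DecidableEq ι]

theorem pow_apply_eq_ite_iterate [Semiring R] {M : Matrix ι ι R} {f : ι → ι}
    (hM : ∀ r c, M r c = if r = f c then 1 else 0) (k : ℕ) (r c : ι) :
    (M ^ k) r c = if r = f^[k] c then 1 else 0 := by
  induction k generalizing c with
  | zero => exact one_apply
  | succ k ih =>
    simp only [pow_succ, mul_apply, hM, mul_ite, mul_one, mul_zero, Finset.sum_ite_eq',
      Finset.mem_univ, if_true, ih, Function.iterate_succ_apply]
    rfl

theorem single_kronecker_add_single_kronecker_mul [CommRing R] {X X' Y Y' : Matrix ι ι R}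
    (hX : X * X' = 1) (hY : Y * Y' = 1) :
    (single (0 : Fin 2) (1 : Fin 2) (1 : R) ⊗ₖ X + single 1 0 1 ⊗ₖ Y) *
      (single 0 1 1 ⊗ₖ Y' + single 1 0 1 ⊗ₖ X') = 1 := by
  simp only [add_mul, mul_add, ← mul_kronecker_mul, single_mul_single_same,
    single_mul_single_of_ne, ne_eq, zero_ne_one, one_ne_zero, not_false_eq_true, hX, hY,
    zero_kronecker, zero_add, add_zero, mul_one, ← add_kronecker]
  rw [add_comm, ← Fin.sum_univ_two fun i => single i i (1 : R), sum_single_one,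
    one_kronecker_one]

end Matrix

theorem ofReal_exp_neg_one_div_pow_ne_one {q n : ℕ} (hq : 0 < q) (hn : n ≠ 0) :
    (Real.exp (-1 / q) : ℂ) ^ n ≠ 1 := by
  have hx : -1 / (q : ℝ) < 0 := div_neg_of_neg_of_pos (by norm_num) (by exact_mod_cast hq)
  exact_mod_cast (pow_lt_one₀ (Real.exp_pos _).le (Real.exp_lt_one_iff.2 hx) hn).ne

theorem ofReal_one_add_exp_ne_zero (x : ℝ) : ((1 + Real.exp x : ℝ) : ℂ) ≠ 0 := by
  exact_mod_cast (by positivity : (0 : ℝ) < 1 + Real.exp x).ne'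

section StepMap

variable {q N : ℕ} {π : Fin q → Equiv.Perm (Fin N)}

def stagePerm (q N : ℕ) (π : Fin q → Equiv.Perm (Fin N)) (j : ℕ) : Equiv.Perm (Fin N) :=
  if j ≤ q then chainPerm q N π j
  else if j ≤ 2 * q then chainPerm q N π q
  else chainPerm q N π (3 * q - j)

theorem xvec_eq_stagePerm (hN : 0 < N) (j : ℕ) :
    xvec q N hN π j = stagePerm q N π j ⟨0, hN⟩ := by
  unfold xvec stagePerm
  split_ifs <;> rfl

theorem stagePerm_zero : stagePerm q N π 0 = 1 := by
  simp [stagePerm, chainPerm]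

theorem stagePerm_succ_of_lt {j : ℕ} (h : j < q) :
    stagePerm q N π (j + 1) = π ⟨j, h⟩ * stagePerm q N π j := by
  simp only [stagePerm, if_pos h.le, if_pos (Nat.succ_le_of_lt h), chainPerm, dif_pos h]

theorem stagePerm_succ_of_le_of_lt {j : ℕ} (h₁ : q ≤ j) (h₂ : j < 2 * q) :
    stagePerm q N π (j + 1) = stagePerm q N π j := by
  rcases h₁.eq_or_lt with rfl | h₁
  · simp [stagePerm, h₂]
  · simp only [stagePerm, if_neg (by omega : ¬j + 1 ≤ q), if_neg (by omega : ¬j ≤ q),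
      if_pos (by omega : j + 1 ≤ 2 * q), if_pos h₂.le]

theorem stagePerm_of_two_mul_le {j : ℕ} (h : 2 * q ≤ j) :
    stagePerm q N π j = chainPerm q N π (3 * q - j) := by
  unfold stagePerm
  split_ifs <;> congr 1 <;> omega

theorem stepFn_fst_val (p : Fin (3 * q) × Fin N) :
    ((stepFn q N π p).1 : ℕ) = ((p.1 : ℕ) + 1) % (3 * q) := by
  unfold stepFn
  split_ifs <;> rfl

theorem stepFn_stagePerm_snd (j : Fin (3 * q)) (x : Fin N) :
    (stepFn q N π (j, stagePerm q N π j x)).2 =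
      stagePerm q N π (((j : ℕ) + 1) % (3 * q)) x := by
  obtain ⟨j, hj⟩ := j
  simp only [stepFn]
  split_ifs with h₁ h₂ <;> dsimp only
  · rw [Nat.mod_eq_of_lt (by omega), stagePerm_succ_of_lt h₁, Equiv.Perm.mul_apply]
  · rw [Nat.mod_eq_of_lt (by omega), stagePerm_succ_of_le_of_lt (not_lt.1 h₁) h₂]
  · obtain ⟨m, hm⟩ : ∃ m, 3 * q - j = m + 1 := ⟨3 * q - j - 1, by omega⟩
    have hwrap : stagePerm q N π ((j + 1) % (3 * q)) = chainPerm q N π m := by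
      rcases (show j + 1 ≤ 3 * q by omega).eq_or_lt with he | hlt
      · rw [he, Nat.mod_self, stagePerm_zero, show m = 0 by omega]
        rfl
      · rw [Nat.mod_eq_of_lt hlt, stagePerm_of_two_mul_le (by omega)]
        congr 1
        omega
    have hm' : m < q := by omega
    rw [hwrap, stagePerm_of_two_mul_le (not_lt.1 h₂), hm, chainPerm, dif_pos hm']
    simp [show 3 * q - 1 - j = m by omega]

theorem stepFn_stagePerm (j : Fin (3 * q)) (x : Fin N) :
    stepFn q N π (j, stagePerm q N π j x) =
      (⟨((j : ℕ) + 1) % (3 * q), Nat.mod_lt _ j.pos⟩,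
        stagePerm q N π (((j : ℕ) + 1) % (3 * q)) x) :=
  Prod.ext (Fin.ext (stepFn_fst_val _)) (stepFn_stagePerm_snd j x)

theorem iterate_stepFn_stagePerm (k : ℕ) (j : Fin (3 * q)) (x : Fin N) :
    (stepFn q N π)^[k] (j, stagePerm q N π j x) =
      (⟨((j : ℕ) + k) % (3 * q), Nat.mod_lt _ j.pos⟩,
        stagePerm q N π (((j : ℕ) + k) % (3 * q)) x) := by
  induction k with
  | zero => simp [Nat.mod_eq_of_lt j.isLt]
  | succ k ih =>
    rw [Function.iterate_succ_apply', ih, stepFn_stagePerm]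
    simp only [Nat.mod_add_mod, add_assoc]

theorem iterate_stepFn_three_mul : (stepFn q N π)^[3 * q] = id := by
  funext ⟨j, y⟩
  obtain ⟨x, rfl⟩ := (stagePerm q N π j).surjective y
  simp [iterate_stepFn_stagePerm, Nat.mod_eq_of_lt j.isLt]

theorem iterate_stepFn_origin (hN : 0 < N) {k : ℕ} (hk : k < 3 * q) :
    (stepFn q N π)^[k] (⟨0, by omega⟩, ⟨0, hN⟩) = (⟨k, hk⟩, xvec q N hN π k) := by
  have h := iterate_stepFn_stagePerm (π := π) k ⟨0, by omega⟩ ⟨0, hN⟩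
  simp only [stagePerm_zero, zero_add, Nat.mod_eq_of_lt hk] at h
  rw [xvec_eq_stagePerm]
  exact h

theorem permMat_pow_three_mul : permMat q N π ^ (3 * q) = 1 := by
  ext r c
  rw [Matrix.pow_apply_eq_ite_iterate (M := permMat q N π) (fun _ _ => rfl),
    iterate_stepFn_three_mul]
  exact Matrix.one_apply.symm

theorem permMatInv_eq_transpose : permMatInv q N π = (permMat q N π)ᵀ := by
  ext r c
  simp only [permMatInv, permMat, Matrix.transpose_apply, Matrix.of_apply, eq_comm]

theorem qlspMat_eq_smul : qlspMat q N π = ((1 + Real.exp (-1 / q) : ℝ) : ℂ)⁻¹ •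
    (Matrix.single (0 : Fin 2) (1 : Fin 2) (1 : ℂ) ⊗ₖ
        (1 - (Real.exp (-1 / q) : ℂ) • permMat q N π) +
      Matrix.single 1 0 1 ⊗ₖ (1 - (Real.exp (-1 / q) : ℂ) • (permMat q N π)ᵀ)) := by
  ext ⟨b, r⟩ ⟨b', c⟩
  fin_cases b <;> fin_cases b' <;>
    simp [qlspMat, permMatInv_eq_transpose, Matrix.kroneckerMap_apply]

theorem qlspMat_inv (hq : 0 < q) : (qlspMat q N π)⁻¹ = ((1 + Real.exp (-1 / q) : ℝ) : ℂ) •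
    (Matrix.single (0 : Fin 2) (1 : Fin 2) (1 : ℂ) ⊗ₖ
        periodicResolvent (Real.exp (-1 / q) : ℂ) (3 * q) (permMat q N π)ᵀ +
      Matrix.single 1 0 1 ⊗ₖ
        periodicResolvent (Real.exp (-1 / q) : ℂ) (3 * q) (permMat q N π)) := by
  have ht := ofReal_exp_neg_one_div_pow_ne_one hq (n := 3 * q) (by omega)
  have hPT : (permMat q N π)ᵀ ^ (3 * q) = 1 := by
    rw [← Matrix.transpose_pow, permMat_pow_three_mul, Matrix.transpose_one]
  apply Matrix.inv_eq_right_inv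
  rw [qlspMat_eq_smul, smul_mul_smul_comm, inv_mul_cancel₀ (ofReal_one_add_exp_ne_zero _),
    one_smul]
  exact Matrix.single_kronecker_add_single_kronecker_mul
    (mul_periodicResolvent permMat_pow_three_mul ht) (mul_periodicResolvent hPT ht)

theorem periodicResolvent_permMat_apply_origin (hq : 0 < q) (hN : 0 < N) (t : ℂ)
    (z : Fin (3 * q) × Fin N) :
    periodicResolvent t (3 * q) (permMat q N π) z (⟨0, by omega⟩, ⟨0, hN⟩) =
      (1 - t ^ (3 * q))⁻¹ * (t ^ (z.1 : ℕ) * if z.2 = xvec q N hN π z.1 then 1 else 0) := by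
  simp only [periodicResolvent, Matrix.smul_apply, Matrix.sum_apply, smul_pow, smul_eq_mul,
    Matrix.pow_apply_eq_ite_iterate (M := permMat q N π) (fun _ _ => rfl)]
  congr 1
  rw [Finset.sum_eq_single_of_mem (z.1 : ℕ) (Finset.mem_range.2 z.1.isLt)]
  · rw [iterate_stepFn_origin hN z.1.isLt]
    simp [Prod.ext_iff]
  · intro k hk hne
    rw [iterate_stepFn_origin hN (Finset.mem_range.1 hk), if_neg, mul_zero]
    rintro rfl
    exact hne rfl

theorem qlspMat_inv_mulVec_single_origin_apply (hq : 0 < q) (hN : 0 < N)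
    (p : Fin 2 × Fin (3 * q) × Fin N) :
    ((qlspMat q N π)⁻¹ *ᵥ Pi.single (0, ⟨0, by omega⟩, ⟨0, hN⟩) 1) p =
      if p.1 = 1 ∧ p.2.2 = xvec q N hN π p.2.1 then
        ((1 + Real.exp (-1 / q) : ℝ) : ℂ) *
          ((1 - (Real.exp (-1 / q) : ℂ) ^ (3 * q))⁻¹ * (Real.exp (-1 / q) : ℂ) ^ (p.2.1 : ℕ))
      else 0 := by
  obtain ⟨b, z⟩ := p
  rw [qlspMat_inv hq, Matrix.mulVec_single]
  fin_cases b <;>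
    simp [Matrix.kroneckerMap_apply, periodicResolvent_permMat_apply_origin (π := π) hq hN]

end StepMap

/-- For every index `(b, j, x)`, the `(b,j,x)`-coordinate of the vector
`A⁻¹ e_{(0,0,0)}` is nonzero if and only if `b = 1` and `x = x_j`. -/
theorem qlspMat_inv_mulVec_single_ne_zero_iff (q N : ℕ) (hq : 1 ≤ q) (hN : 1 ≤ N)
    (π : Fin q → Equiv.Perm (Fin N)) (p : Fin 2 × Fin (3 * q) × Fin N) :
    (qlspMat q N π)⁻¹.mulVec
        (Pi.single ((0 : Fin 2), (⟨0, by omega⟩ : Fin (3 * q)),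
          (⟨0, by omega⟩ : Fin N)) 1) p ≠ 0 ↔
      p.1 = 1 ∧ p.2.2 = xvec q N hN π (p.2.1 : ℕ) := by
  have ht := ofReal_exp_neg_one_div_pow_ne_one hq (n := 3 * q) (by omega)
  have ht₀ : (Real.exp (-1 / q) : ℂ) ≠ 0 := Complex.ofReal_ne_zero.2 (Real.exp_ne_zero _)
  rw [qlspMat_inv_mulVec_single_origin_apply hq hN, ite_ne_right_iff]
  exact and_iff_left <| mul_ne_zero (ofReal_one_add_exp_ne_zero _)
    (mul_ne_zero (inv_ne_zero (sub_ne_zero.2 ht.symm)) (pow_ne_zero _ ht₀))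
end
end

section
/- Suppose A, B ∈ ℂ^{n×n} are Hermitian matrices and κ ≥ 1, ε are real numbers with 0 < ε < 1/κ, such that I/κ ≤ A ≤ I in the Loewner order, B ≤ I in the Loewner order, and ‖A − B‖ ≤ ε. Then for every vector x ∈ ℂ^{n} with Euclidean norm ‖x‖ = 1, the normalized solutions satisfy ‖ A^{−1}x/‖A^{−1}x‖ − B^{−1}x/‖B^{−1}x‖ ‖ ≤ κ²(κ + 1)ε/(1 − κε). -/
/-!
Put `u = A⁻¹x` and `v = B⁻¹x`. Since `0 ≤ A ≤ 1`, `‖u‖ ≥ ‖Au‖ = 1`. In the Loewner order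
`B ≥ A - ‖A - B‖ ≥ κ⁻¹ - ε > 0`, so `‖A⁻¹‖ ≤ κ` and `‖B⁻¹‖ ≤ κ / (1 - κε)`, and the resolvent
identity `A⁻¹ - B⁻¹ = A⁻¹(B - A)B⁻¹` gives `‖u - v‖ ≤ κ²ε / (1 - κε)`. Normalizing costs at most
the factor `2 / ‖u‖ ≤ 2 ≤ κ + 1`. All order arguments take place in the C⋆-algebra of operators
on `ℂⁿ`, to which `Matrix.toEuclideanCLM` transports the Loewner order and `A⁻¹`.
-/

open Matrix ComplexOrder

noncomputable section

open Ring
open scoped MatrixOrder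

theorem map_ringInverse {M₀ N₀ F : Type*} [MonoidWithZero M₀] [MonoidWithZero N₀]
    [EquivLike F M₀ N₀] [MulEquivClass F M₀ N₀] (f : F) (a : M₀) : f a⁻¹ʳ = (f a)⁻¹ʳ := by
  by_cases ha : IsUnit a
  · rw [eq_comm, ← mul_one (f a)⁻¹ʳ, inverse_mul_eq_iff_eq_mul _ _ _ (ha.map f), ← map_mul,
      mul_inverse_cancel a ha, map_one]
  · rw [inverse_non_unit a ha, inverse_non_unit _ ((MulEquiv.isUnit_map f).not.2 ha), map_zero]

theorem Ring.inverse_algebraMap {K R : Type*} [Field K] [Semiring R] [Algebra K R] (c : K) :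
    (algebraMap K R c)⁻¹ʳ = algebraMap K R c⁻¹ := by
  rcases eq_or_ne c 0 with rfl | hc
  · simp only [map_zero, inverse_zero, _root_.inv_zero]
  · rw [← mul_one (algebraMap K R c)⁻¹ʳ, inverse_mul_eq_iff_eq_mul _ _ _
      ((isUnit_iff_ne_zero.2 hc).map _), ← map_mul, mul_inv_cancel₀ hc, map_one]

theorem IsSelfAdjoint.of_le_one {R : Type*} [Ring R] [PartialOrder R] [StarRing R]
    [StarOrderedRing R] {a : R} (h : a ≤ 1) : IsSelfAdjoint a := by
  simpa using (IsSelfAdjoint.one R).sub (sub_nonneg.2 h).isSelfAdjoint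

namespace NormedSpace

variable {V : Type*} [NormedAddCommGroup V] [NormedSpace ℝ V]

theorem norm_normalize_sub_normalize_le {x : V} (hx : x ≠ 0) (y : V) :
    ‖normalize x - normalize y‖ ≤ 2 * ‖x - y‖ / ‖x‖ := by
  have hx' : 0 < ‖x‖ := norm_pos_iff.2 hx
  have hxy : ‖normalize x - ‖x‖⁻¹ • y‖ = ‖x - y‖ / ‖x‖ := by
    rw [normalize, ← smul_sub, norm_smul, norm_inv, norm_norm, inv_mul_eq_div]
  have hyy : ‖‖x‖⁻¹ • y - normalize y‖ ≤ ‖x - y‖ / ‖x‖ := by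
    rcases eq_or_ne y 0 with rfl | hy
    · simp only [smul_zero, normalize_zero_eq_zero, sub_zero, norm_zero]
      positivity
    have hy' : 0 < ‖y‖ := norm_pos_iff.2 hy
    calc ‖‖x‖⁻¹ • y - normalize y‖ = |‖x‖ - ‖y‖| / ‖x‖ := by
          rw [normalize, ← sub_smul, norm_smul, Real.norm_eq_abs, inv_sub_inv hx'.ne' hy'.ne',
            abs_div, abs_of_pos (mul_pos hx' hy'), abs_sub_comm]
          field_simp
      _ ≤ ‖x - y‖ / ‖x‖ := by gcongr; exact abs_norm_sub_norm_le x y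
  calc ‖normalize x - normalize y‖
      ≤ ‖normalize x - ‖x‖⁻¹ • y‖ + ‖‖x‖⁻¹ • y - normalize y‖ :=
        norm_sub_le_norm_sub_add_norm_sub _ _ _
    _ ≤ ‖x - y‖ / ‖x‖ + ‖x - y‖ / ‖x‖ := by rw [hxy]; gcongr
    _ = 2 * ‖x - y‖ / ‖x‖ := by ring

end NormedSpace

namespace CStarAlgebra

variable {A : Type*} [CStarAlgebra A] [PartialOrder A] [StarOrderedRing A]

theorem sub_algebraMap_le_of_norm_sub_le {a b : A} (ha : IsSelfAdjoint a) (hb : IsSelfAdjoint b)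
    {ε : ℝ} (h : ‖a - b‖ ≤ ε) : a - algebraMap ℝ A ε ≤ b :=
  sub_le_comm.1 <| (ha.sub hb).le_algebraMap_norm_self.trans (algebraMap_mono A h)

theorem norm_ringInverse_le_of_algebraMap_le {a : A} {c : ℝ} (hc : 0 < c)
    (h : algebraMap ℝ A c ≤ a) : ‖a⁻¹ʳ‖ ≤ c⁻¹ := by
  have ha : IsStrictlyPositive a := (isStrictlyPositive_algebraMap hc).of_le h
  rw [norm_le_iff_le_algebraMap _ (inv_nonneg.2 hc.le) ha.ringInverse.nonneg,
    ← inverse_algebraMap]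
  exact ringInverse_le_ringInverse h (isStrictlyPositive_algebraMap hc)

theorem norm_ringInverse_sub_ringInverse_le {a b : A} {c d : ℝ} (hc : 0 < c) (hd : 0 < d)
    (ha : algebraMap ℝ A c ≤ a) (hb : algebraMap ℝ A d ≤ b) :
    ‖a⁻¹ʳ - b⁻¹ʳ‖ ≤ c⁻¹ * ‖a - b‖ * d⁻¹ := by
  have hunit : ∀ {r : ℝ} {x : A}, 0 < r → algebraMap ℝ A r ≤ x → IsUnit x :=
    fun hr h => ((isStrictlyPositive_algebraMap hr).of_le h).isUnit
  rw [inverse_sub_inverse (iff_of_true (hunit hc ha) (hunit hd hb)), norm_sub_rev a b]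
  refine (norm_mul_le _ _).trans (mul_le_mul ((norm_mul_le _ _).trans ?_)
    (norm_ringInverse_le_of_algebraMap_le hd hb) (norm_nonneg _) (by positivity))
  exact mul_le_mul_of_nonneg_right (norm_ringInverse_le_of_algebraMap_le hc ha) (norm_nonneg _)

end CStarAlgebra

namespace ContinuousLinearMap

theorem norm_le_norm_ringInverse_apply {𝕜 E : Type*} [NontriviallyNormedField 𝕜]
    [NormedAddCommGroup E] [NormedSpace 𝕜 E] {T : E →L[𝕜] E} (hT : IsUnit T) (h : ‖T‖ ≤ 1)
    (x : E) : ‖x‖ ≤ ‖T⁻¹ʳ x‖ :=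
  calc ‖x‖ = ‖T (T⁻¹ʳ x)‖ := by
        rw [← mul_apply_eq_comp, mul_inverse_cancel T hT, one_apply_eq_self]
    _ ≤ ‖T‖ * ‖T⁻¹ʳ x‖ := le_opNorm _ _
    _ ≤ ‖T⁻¹ʳ x‖ := mul_le_of_le_one_left (norm_nonneg _) h

variable {E : Type*} [NormedAddCommGroup E] [InnerProductSpace ℂ E] [CompleteSpace E]

theorem norm_normalize_ringInverse_apply_sub_le {T S : E →L[ℂ] E} {κ ε : ℝ} (hκ : 1 ≤ κ)
    (hκε : κ * ε < 1) (hT : algebraMap ℝ _ κ⁻¹ ≤ T) (hT1 : T ≤ 1) (hS1 : S ≤ 1)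
    (hTS : ‖T - S‖ ≤ ε) {x : E} (hx : ‖x‖ = 1) :
    ‖NormedSpace.normalize (T⁻¹ʳ x) - NormedSpace.normalize (S⁻¹ʳ x)‖ ≤
      κ ^ 2 * (κ + 1) * ε / (1 - κ * ε) := by
  have hκ0 : 0 < κ := zero_lt_one.trans_le hκ
  have hc : 0 < κ⁻¹ - ε := by
    rw [sub_pos, inv_eq_one_div, lt_div_iff₀ hκ0]; linarith
  have hS : algebraMap ℝ _ (κ⁻¹ - ε) ≤ S := by
    rw [map_sub]
    exact (sub_le_sub_right hT _).trans <| CStarAlgebra.sub_algebraMap_le_of_norm_sub_le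
      (.of_le_one hT1) (.of_le_one hS1) hTS
  have hTpos : IsStrictlyPositive T := (isStrictlyPositive_algebraMap (inv_pos.2 hκ0)).of_le hT
  have hu : 1 ≤ ‖T⁻¹ʳ x‖ := hx ▸ norm_le_norm_ringInverse_apply hTpos.isUnit
    ((CStarAlgebra.norm_le_one_iff_of_nonneg T hTpos.nonneg).2 hT1) x
  have huv : ‖T⁻¹ʳ x - S⁻¹ʳ x‖ ≤ κ ^ 2 * ε / (1 - κ * ε) :=
    calc ‖T⁻¹ʳ x - S⁻¹ʳ x‖ ≤ ‖T⁻¹ʳ - S⁻¹ʳ‖ := by simpa [hx] using (T⁻¹ʳ - S⁻¹ʳ).le_opNorm x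
      _ ≤ κ⁻¹⁻¹ * ε * (κ⁻¹ - ε)⁻¹ := by
        grw [CStarAlgebra.norm_ringInverse_sub_ringInverse_le (inv_pos.2 hκ0) hc hT hS, hTS]
      _ = κ ^ 2 * ε / (1 - κ * ε) := by field_simp
  calc _ ≤ 2 * ‖T⁻¹ʳ x - S⁻¹ʳ x‖ / ‖T⁻¹ʳ x‖ :=
        NormedSpace.norm_normalize_sub_normalize_le (norm_pos_iff.1 (one_pos.trans_le hu)) _
    _ ≤ 2 * ‖T⁻¹ʳ x - S⁻¹ʳ x‖ := div_le_self (by positivity) hu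
    _ ≤ (κ + 1) * (κ ^ 2 * ε / (1 - κ * ε)) := by gcongr; linarith
    _ = κ ^ 2 * (κ + 1) * ε / (1 - κ * ε) := by ring

end ContinuousLinearMap

theorem normalized_solution_perturbation_bound_general {n : ℕ} (A B : Matrix (Fin n) (Fin n) ℂ)
    (κ ε : ℝ) (hκ : 1 ≤ κ) (hεκ : ε < 1 / κ)
    (hlow : (A - (κ : ℂ)⁻¹ • (1 : Matrix (Fin n) (Fin n) ℂ)).PosSemidef)
    (hup : ((1 : Matrix (Fin n) (Fin n) ℂ) - A).PosSemidef)
    (hBup : ((1 : Matrix (Fin n) (Fin n) ℂ) - B).PosSemidef)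
    (hAB : l2OpNorm (A - B) ≤ ε)
    (x : EuclideanSpace ℂ (Fin n)) (hx : ‖x‖ = 1) :
    ‖‖Matrix.toEuclideanCLM (𝕜 := ℂ) A⁻¹ x‖⁻¹ • Matrix.toEuclideanCLM (𝕜 := ℂ) A⁻¹ x -
        ‖Matrix.toEuclideanCLM (𝕜 := ℂ) B⁻¹ x‖⁻¹ • Matrix.toEuclideanCLM (𝕜 := ℂ) B⁻¹ x‖ ≤
      κ ^ 2 * (κ + 1) * ε / (1 - κ * ε) := by
  have hκε : κ * ε < 1 := by rwa [lt_div_iff₀' (by linarith)] at hεκ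
  have hAlow : algebraMap ℝ _ κ⁻¹ ≤ toEuclideanCLM (𝕜 := ℂ) A := by
    rw [IsScalarTower.algebraMap_apply ℝ ℂ,
      ← AlgHomClass.commutes (toEuclideanCLM (𝕜 := ℂ) (n := Fin n)), map_le_map_iff,
      Matrix.le_iff, Algebra.algebraMap_eq_smul_one]
    simpa using hlow
  rw [nonsing_inv_eq_ringInverse, nonsing_inv_eq_ringInverse, map_ringInverse, map_ringInverse]
  refine ContinuousLinearMap.norm_normalize_ringInverse_apply_sub_le hκ hκε hAlow ?_ ?_
    (by rwa [l2OpNorm, map_sub] at hAB) hx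
  · rwa [← map_one (toEuclideanCLM (𝕜 := ℂ) (n := Fin n)), map_le_map_iff]
  · rwa [← map_one (toEuclideanCLM (𝕜 := ℂ) (n := Fin n)), map_le_map_iff]

/-- If `A, B ∈ ℂ^{n×n}` are Hermitian, `κ ≥ 1`, `0 < ε < 1/κ`,
`I/κ ≤ A ≤ I` and `B ≤ I` in the Loewner order, and `‖A − B‖ ≤ ε`, then for every unit
vector `x ∈ ℂⁿ`, the normalized solutions satisfy
`‖ A⁻¹x/‖A⁻¹x‖ − B⁻¹x/‖B⁻¹x‖ ‖ ≤ κ²(κ + 1)ε/(1 − κε)`. -/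
theorem normalized_solution_perturbation_bound {n : ℕ} (A B : Matrix (Fin n) (Fin n) ℂ)
    (κ ε : ℝ) (hκ : 1 ≤ κ) (hε : 0 < ε) (hεκ : ε < 1 / κ)
    (hA : A.IsHermitian) (hB : B.IsHermitian)
    (hlow : (A - (κ : ℂ)⁻¹ • (1 : Matrix (Fin n) (Fin n) ℂ)).PosSemidef)
    (hup : ((1 : Matrix (Fin n) (Fin n) ℂ) - A).PosSemidef)
    (hBup : ((1 : Matrix (Fin n) (Fin n) ℂ) - B).PosSemidef)
    (hAB : l2OpNorm (A - B) ≤ ε)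
    (x : EuclideanSpace ℂ (Fin n)) (hx : ‖x‖ = 1) :
    ‖‖Matrix.toEuclideanCLM (𝕜 := ℂ) A⁻¹ x‖⁻¹ • Matrix.toEuclideanCLM (𝕜 := ℂ) A⁻¹ x -
        ‖Matrix.toEuclideanCLM (𝕜 := ℂ) B⁻¹ x‖⁻¹ • Matrix.toEuclideanCLM (𝕜 := ℂ) B⁻¹ x‖ ≤
      κ ^ 2 * (κ + 1) * ε / (1 - κ * ε) :=
  normalized_solution_perturbation_bound_general A B κ ε hκ hεκ hlow hup hBup hAB x hx
end
end

section
/- Suppose A, A' ∈ ℂ^{n×n} are Hermitian matrices and κ ≥ 1, ε' are real numbers with 0 < ε' < 1/(2κ), such that I/κ ≤ A ≤ I in the Loewner order, ‖A'‖ ≤ 1, and ‖2A' − A‖ ≤ ε'. Then I/κ' ≤ A' ≤ I in the Loewner order, where κ' = 2κ/(1 − 2κε'). -/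
open Matrix ComplexOrder

noncomputable section

/-!
In the C⋆-algebra of matrices with the spectral norm, a self-adjoint `E` satisfies
`-‖E‖ ≤ E ≤ ‖E‖`. With `E = 2A' - A` this gives `2A' = A + E ≥ 1/κ - ε'`, so
`A' ≥ (1/κ - ε')/2 ≥ 1/(2κ) - ε' = 1/κ'`; similarly `A' ≤ ‖A'‖ ≤ 1`.
-/

section CStarAlgebra

variable {A : Type*} [CStarAlgebra A] [PartialOrder A] [StarOrderedRing A]

theorem algebraMap_sub_div_two_le_of_norm_two_smul_sub_le {a b : A} {c ε : ℝ}
    (hb : IsSelfAdjoint b) (hc : algebraMap ℝ A c ≤ a) (hε : ‖(2 : ℂ) • b - a‖ ≤ ε) :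
    algebraMap ℝ A ((c - ε) / 2) ≤ b := by
  have ha : IsSelfAdjoint a := by
    simpa using (IsSelfAdjoint.of_nonneg (sub_nonneg.mpr hc)).add (.algebraMap A (.all c))
  set e := (2 : ℂ) • b - a
  have he : IsSelfAdjoint e := ((IsSelfAdjoint.ofNat 2).smul hb).sub ha
  have h2b : algebraMap ℝ A (c - ε) ≤ (2 : ℝ) • b :=
    calc algebraMap ℝ A (c - ε) = algebraMap ℝ A c - algebraMap ℝ A ε := map_sub _ _ _
      _ ≤ a - algebraMap ℝ A ‖e‖ := sub_le_sub hc (algebraMap_mono A hε)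
      _ ≤ a + e := by rw [sub_eq_add_neg]; exact add_le_add_right he.neg_algebraMap_norm_le_self a
      _ = (2 : ℝ) • b := by simp [e, two_smul]
  calc algebraMap ℝ A ((c - ε) / 2) = (2⁻¹ : ℝ) • algebraMap ℝ A (c - ε) := by
        rw [div_eq_inv_mul, map_mul, Algebra.algebraMap_eq_smul_one 2⁻¹, smul_one_mul]
    _ ≤ (2⁻¹ : ℝ) • (2 : ℝ) • b := smul_le_smul_of_nonneg_left h2b (by norm_num)
    _ = b := by rw [smul_smul]; norm_num

end CStarAlgebra

section Loewner

open scoped MatrixOrder Matrix.Norms.L2Operator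

variable {n : Type*} [Fintype n] [DecidableEq n]

theorem Matrix.algebraMap_real_le_iff {M : Matrix n n ℂ} {r : ℝ} :
    algebraMap ℝ (Matrix n n ℂ) r ≤ M ↔ (M - (r : ℂ) • 1).PosSemidef := by
  rw [Matrix.le_iff, Algebra.algebraMap_eq_smul_one, Complex.coe_smul]

theorem Matrix.IsHermitian.posSemidef_one_sub_of_l2OpNorm_le_one {M : Matrix n n ℂ}
    (hM : M.IsHermitian) (h : l2OpNorm M ≤ 1) : (1 - M).PosSemidef :=
  hM.isSelfAdjoint.le_algebraMap_norm_self.trans ((algebraMap_mono _ h).trans_eq (map_one _))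

theorem Matrix.posSemidef_sub_smul_one_of_l2OpNorm_two_smul_sub_le {M N : Matrix n n ℂ}
    {c ε d : ℝ} (hN : N.IsHermitian) (hM : (M - (c : ℂ) • 1).PosSemidef)
    (h : l2OpNorm ((2 : ℂ) • N - M) ≤ ε) (hd : d ≤ (c - ε) / 2) :
    (N - (d : ℂ) • 1).PosSemidef := by
  rw [← algebraMap_real_le_iff] at hM ⊢
  exact (algebraMap_mono _ hd).trans
    (algebraMap_sub_div_two_le_of_norm_two_smul_sub_le hN.isSelfAdjoint hM h)

end Loewner

theorem blockEncoded_wellConditioned_general {n : ℕ} (A A' : Matrix (Fin n) (Fin n) ℂ)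
    (κ ε' : ℝ) (hκ : 1 ≤ κ) (hε' : 0 < ε')
    (hA' : A'.IsHermitian)
    (hlow : (A - (κ : ℂ)⁻¹ • (1 : Matrix (Fin n) (Fin n) ℂ)).PosSemidef)
    (hA'norm : l2OpNorm A' ≤ 1)
    (hAA' : l2OpNorm ((2 : ℂ) • A' - A) ≤ ε') :
    (A' - ((2 * κ / (1 - 2 * κ * ε') : ℝ) : ℂ)⁻¹ •
        (1 : Matrix (Fin n) (Fin n) ℂ)).PosSemidef ∧
      ((1 : Matrix (Fin n) (Fin n) ℂ) - A').PosSemidef := by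
  rw [← Complex.ofReal_inv] at hlow ⊢
  refine ⟨posSemidef_sub_smul_one_of_l2OpNorm_two_smul_sub_le hA' hlow hAA' ?_,
    hA'.posSemidef_one_sub_of_l2OpNorm_le_one hA'norm⟩
  have hκ0 : κ ≠ 0 := by positivity
  calc (2 * κ / (1 - 2 * κ * ε'))⁻¹ = κ⁻¹ / 2 - ε' := by rw [inv_div]; field_simp
    _ ≤ (κ⁻¹ - ε') / 2 := by linarith

/-- If `A, A' ∈ ℂ^{n×n}` are Hermitian, `κ ≥ 1`, `0 < ε' < 1/(2κ)`,
`I/κ ≤ A ≤ I` in the Loewner order, `‖A'‖ ≤ 1`, and `‖2A' − A‖ ≤ ε'`, then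
`I/κ' ≤ A' ≤ I` in the Loewner order, where `κ' = 2κ/(1 − 2κε')`. -/
theorem blockEncoded_wellConditioned {n : ℕ} (A A' : Matrix (Fin n) (Fin n) ℂ)
    (κ ε' : ℝ) (hκ : 1 ≤ κ) (hε' : 0 < ε') (hε'κ : ε' < 1 / (2 * κ))
    (hA : A.IsHermitian) (hA' : A'.IsHermitian)
    (hlow : (A - (κ : ℂ)⁻¹ • (1 : Matrix (Fin n) (Fin n) ℂ)).PosSemidef)
    (hup : ((1 : Matrix (Fin n) (Fin n) ℂ) - A).PosSemidef)
    (hA'norm : l2OpNorm A' ≤ 1)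
    (hAA' : l2OpNorm ((2 : ℂ) • A' - A) ≤ ε') :
    (A' - ((2 * κ / (1 - 2 * κ * ε') : ℝ) : ℂ)⁻¹ •
        (1 : Matrix (Fin n) (Fin n) ℂ)).PosSemidef ∧
      ((1 : Matrix (Fin n) (Fin n) ℂ) - A').PosSemidef :=
  blockEncoded_wellConditioned_general A A' κ ε' hκ hε' hA' hlow hA'norm hAA'
end
end
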